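/- arXiv:1304.7936 — 8 statements merged into one kernel-verified Lean document; each statement's English description precedes it below -/
import Mathlib

section
/- Let μ be a finite Borel measure on the unit interval [0,1]. Then the function f : [0,∞) → [0,∞) defined by f(x) = ∫_{[0,1]} (1 !_t x) dμ(t) is operator monotone: for every n ∈ ℕ and all n×n positive semidefinite complex matrices A, B with A ≤ B in the Loewner order, f(A) ≤ f(B), where f(A) is obtained by applying f to A via the continuous functional calculus. -/
/-!
For `0 < t < 1` and `x ≥ 0` we have `1 !_t x = (1 - t)⁻¹ (1 - (1 + c x)⁻¹)` with
`c = (1 - t) / t`, and `x ↦ 1 - (1 + x)⁻¹` is operator monotone because inversion is operator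
antitone; for `t = 0` and `t = 1` the mean is the constant `1` and the identity. Hence every
`1 !_t ·` is operator monotone on the positive cone of any unital C⋆-algebra. The continuous
functional calculus commutes with integration against `μ`, so `f(a) = ∫ (1 !_t a) dμ(t)` is
operator monotone as well; matrices with the ℓ²-operator norm and the Loewner order are a
special case.
-/

open MeasureTheory Real ComplexOrder

/-- The `t`-weighted harmonic mean `1 !_t x` of `1` and `x`, for `t ∈ [0,1]`, `x ∈ [0,∞)`. -/
noncomputable def whm (t x : ℝ) : ℝ :=
  if t = 0 ∧ x = 0 then 1 else x / ((1 - t) * x + t)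

open Set Function NonnegSpectrumClass

section Scalar

variable {t x : ℝ}

lemma whm_zero_left (x : ℝ) : whm 0 x = 1 := by
  by_cases hx : x = 0 <;> simp [whm, hx]

lemma whm_one_left (x : ℝ) : whm 1 x = x := by
  simp [whm]

lemma whm_of_pos_left (ht : 0 < t) (x : ℝ) : whm t x = x / ((1 - t) * x + t) := by
  simp [whm, ht.ne']

lemma whm_eq_mul_one_sub_inv (ht : t ∈ Ioo 0 1) (hx : 0 ≤ x) :
    whm t x = (1 - t)⁻¹ * (1 - (1 + (1 - t) / t * x)⁻¹) := by
  obtain ⟨ht0, ht1⟩ := ht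
  have : 0 < (1 - t) * x + t := by nlinarith
  rw [whm_of_pos_left ht0]
  field_simp
  ring

lemma whm_nonneg (ht : t ∈ Icc 0 1) (hx : 0 ≤ x) : 0 ≤ whm t x := by
  unfold whm
  split_ifs
  · exact zero_le_one
  · exact div_nonneg hx (by nlinarith [ht.1, ht.2])

lemma whm_le_max (ht : t ∈ Icc 0 1) (hx : 0 ≤ x) : whm t x ≤ max 1 x := by
  obtain ⟨ht0, ht1⟩ := ht
  rcases ht0.eq_or_lt with rfl | ht0
  · simp [whm_zero_left]
  rw [whm_of_pos_left ht0, div_le_iff₀ (by nlinarith)]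
  rcases le_total x 1 with hx1 | hx1
  · rw [max_eq_left hx1]
    nlinarith
  · have : 1 ≤ (1 - t) * x + t := by nlinarith
    rw [max_eq_right hx1]
    nlinarith

lemma continuousOn_uncurry_whm : ContinuousOn (uncurry whm) (Ioc 0 1 ×ˢ Ici 0) := by
  have hden : ∀ p ∈ Ioc (0 : ℝ) 1 ×ˢ Ici 0, 0 < (1 - p.1) * p.2 + p.1 :=
    fun p ⟨⟨h0, h1⟩, (hx : 0 ≤ p.2)⟩ => by nlinarith
  refine ContinuousOn.congr (f := fun p : ℝ × ℝ => p.2 / ((1 - p.1) * p.2 + p.1)) ?_ ?_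
  · exact continuousOn_snd.div (by fun_prop) fun p hp => (hden p hp).ne'
  · rintro ⟨t, x⟩ ⟨ht, -⟩
    exact whm_of_pos_left ht.1 x

lemma continuousOn_whm (ht : t ∈ Icc 0 1) : ContinuousOn (whm t) (Ici 0) := by
  rcases ht.1.eq_or_lt with rfl | ht0
  · rw [show whm 0 = fun _ => 1 from funext whm_zero_left]
    exact continuousOn_const
  · exact continuousOn_uncurry_whm.comp (f := fun x => (t, x)) (by fun_prop)
      fun x hx => ⟨⟨ht0, ht.2⟩, hx⟩

end Scalar

section CStarAlgebra

variable {A : Type*} [CStarAlgebra A] [PartialOrder A] [StarOrderedRing A]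

lemma cfc_whm_eq_smul_cfcₙ {t : ℝ} (ht : t ∈ Ioo 0 1) {a : A} (ha : 0 ≤ a) :
    cfc (whm t) a =
      (1 - t)⁻¹ • cfcₙ (fun x : ℝ => 1 - (1 + x)⁻¹) (((1 - t) / t) • a) := by
  set c := (1 - t) / t
  have hc : 0 ≤ c := div_nonneg (by linarith [ht.2]) ht.1.le
  have hg : ContinuousOn (fun x : ℝ => 1 - (1 + x)⁻¹) (Ici 0) :=
    continuousOn_const.sub <| ContinuousOn.inv₀ (by fun_prop)
      fun x (hx : 0 ≤ x) => (by linarith : (0 : ℝ) < 1 + x).ne'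
  have hmaps : MapsTo (c • ·) (spectrum ℝ a) (Ici 0) :=
    fun x hx => mem_Ici.2 (smul_nonneg hc (spectrum_nonneg_of_nonneg ha hx))
  calc cfc (whm t) a = cfc (fun x => (1 - t)⁻¹ * (1 - (1 + c • x)⁻¹)) a :=
        cfc_congr fun x hx => whm_eq_mul_one_sub_inv ht (spectrum_nonneg_of_nonneg ha hx)
    _ = (1 - t)⁻¹ • cfc (fun x => 1 - (1 + c • x)⁻¹) a :=
        cfc_const_mul _ _ a (hg.comp (by fun_prop) hmaps)
    _ = _ := by
      rw [cfc_comp_smul c (fun x => 1 - (1 + x)⁻¹) a (hg.mono hmaps.image_subset),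
        cfcₙ_eq_cfc (hg.mono fun x => nonneg_of_mem_quasispectrum (smul_nonneg hc ha))]

lemma monotoneOn_cfc_whm {t : ℝ} (ht : t ∈ Icc 0 1) :
    MonotoneOn (cfc (whm t)) (Ici (0 : A)) := by
  intro a (ha : 0 ≤ a) b (hb : 0 ≤ b) hab
  rcases ht.1.eq_or_lt with rfl | ht0
  · rw [show whm 0 = fun _ => 1 from funext whm_zero_left, cfc_const (1 : ℝ) a,
      cfc_const (1 : ℝ) b]
  rcases ht.2.eq_or_lt with rfl | ht1
  · rwa [show whm 1 = id from funext whm_one_left, cfc_id ℝ a, cfc_id ℝ b]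
  have hc : 0 ≤ (1 - t) / t := div_nonneg (by linarith) ht0.le
  rw [cfc_whm_eq_smul_cfcₙ ⟨ht0, ht1⟩ ha, cfc_whm_eq_smul_cfcₙ ⟨ht0, ht1⟩ hb]
  gcongr
  exact CFC.monotoneOn_one_sub_one_add_inv_real (smul_nonneg hc ha) (smul_nonneg hc hb)
    (smul_le_smul_of_nonneg_left hab hc)

/-- `(t, x) ↦ 1 !_t x` is discontinuous at `(0, 0)`, so `t = 0` is treated separately. -/
lemma aestronglyMeasurable_mkD_whm (μ : Measure (Icc (0 : ℝ) 1)) {a : A} (ha : 0 ≤ a) :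
    AEStronglyMeasurable (fun t : Icc (0 : ℝ) 1 =>
      ContinuousMap.mkD ((spectrum ℝ a).domRestrict (whm t)) 0) μ := by
  have hpos : MeasurableSet {t : Icc (0 : ℝ) 1 | 0 < (t : ℝ)} :=
    measurableSet_lt measurable_const measurable_subtype_coe
  rw [← Measure.restrict_add_restrict_compl (μ := μ) hpos, aestronglyMeasurable_add_measure_iff]
  constructor
  · refine ContinuousMap.aeStronglyMeasurable_restrict_mkD_restrict_of_uncurry hpos _ _ ?_
    exact continuousOn_uncurry_whm.comp (f := fun p : Icc (0 : ℝ) 1 × ℝ => ((p.1 : ℝ), p.2))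
      (by fun_prop) fun p hp => ⟨⟨hp.1, p.1.2.2⟩, spectrum_nonneg_of_nonneg ha hp.2⟩
  · refine (aestronglyMeasurable_const
      (b := ContinuousMap.mkD ((spectrum ℝ a).domRestrict (whm 0)) 0)).congr ?_
    refine ae_restrict_of_forall_mem hpos.compl fun t ht => ?_
    have : (t : ℝ) = 0 := le_antisymm (not_lt.1 ht) t.2.1
    simp only [this]

variable {μ : Measure (Icc (0 : ℝ) 1)} [IsFiniteMeasure μ]

lemma integrable_mkD_whm {a : A} (ha : 0 ≤ a) :
    Integrable (fun t : Icc (0 : ℝ) 1 =>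
      ContinuousMap.mkD ((spectrum ℝ a).domRestrict (whm t)) 0) μ := by
  refine ⟨aestronglyMeasurable_mkD_whm μ ha, ?_⟩
  obtain ⟨R, hR⟩ := (spectrum.isCompact (𝕜 := ℝ) a).bddAbove
  refine ContinuousMap.hasFiniteIntegral_mkD_restrict_of_bound _ _
    (ae_of_all _ fun t => (continuousOn_whm t.2).mono fun x hx => spectrum_nonneg_of_nonneg ha hx)
    (fun _ => max 1 R) (hasFiniteIntegral_const _) (ae_of_all _ fun t x hx => ?_)
  have hx0 := spectrum_nonneg_of_nonneg ha hx
  rw [Real.norm_of_nonneg (whm_nonneg t.2 hx0)]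
  exact (whm_le_max t.2 hx0).trans (max_le_max le_rfl (hR hx))

lemma cfc_integral_whm {a : A} (ha : 0 ≤ a) :
    cfc (fun x => ∫ t, whm t x ∂μ) a = ∫ t, cfc (whm t) a ∂μ :=
  cfc_integral' _ a (ae_of_all _ fun t => (continuousOn_whm t.2).mono
    fun x hx => spectrum_nonneg_of_nonneg ha hx) (integrable_mkD_whm ha)

theorem monotoneOn_cfc_of_eq_integral_whm (f : ℝ → ℝ)
    (hf : ∀ x : ℝ, 0 ≤ x → f x = ∫ t : Icc (0 : ℝ) 1, whm t x ∂μ) :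
    MonotoneOn (cfc f) (Ici (0 : A)) := by
  have heq : EqOn (cfc f) (fun a => ∫ t, cfc (whm t) a ∂μ) (Ici (0 : A)) :=
    fun a (ha : 0 ≤ a) => (cfc_congr fun x hx => hf x (spectrum_nonneg_of_nonneg ha hx)).trans
      (cfc_integral_whm ha)
  refine MonotoneOn.congr ?_ heq.symm
  exact integral_monotoneOn_of_integrand_ae (ae_of_all _ fun t => monotoneOn_cfc_whm t.2)
    fun a ha => integrable_cfc' _ a (integrable_mkD_whm ha)

end CStarAlgebra

open scoped Matrix.Norms.L2Operator MatrixOrder in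
theorem stmt0 (μ : Measure (Set.Icc (0 : ℝ) 1)) [IsFiniteMeasure μ] (f : ℝ → ℝ)
    (hf : ∀ x : ℝ, 0 ≤ x → f x = ∫ t : Set.Icc (0 : ℝ) 1, whm (t : ℝ) x ∂μ) :
    ∀ (n : ℕ) (A B : Matrix (Fin n) (Fin n) ℂ),
      A.PosSemidef → B.PosSemidef → (B - A).PosSemidef →
      (cfc f B - cfc f A).PosSemidef :=
  fun _ A B hA hB hAB =>
    (monotoneOn_cfc_of_eq_integral_whm f hf hA.nonneg hB.nonneg hAB : cfc f A ≤ cfc f B)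
end

section
/- Let μ₁ and μ₂ be finite Borel measures on [0,1] such that ∫_{[0,1]} (1 !_t x) dμ₁(t) = ∫_{[0,1]} (1 !_t x) dμ₂(t) for every x ∈ [0,∞). Then μ₁ = μ₂. -/
/-!
For `x = (1 - w)⁻¹` the weighted harmonic mean becomes `1 !_t x = (1 - t w)⁻¹`, so the hypothesis
says that the generating functions `w ↦ ∫ (1 - t w)⁻¹ dμᵢ(t) = ∑ₙ (∫ tⁿ dμᵢ) wⁿ` of the moments of
`μ₁` and `μ₂` agree near `w = 0`. Uniqueness of power series expansions gives equal moments, hence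
equal integrals of all polynomials, and by Weierstrass density of all continuous functions.
-/

open MeasureTheory Real

open Filter Topology

-- No condition on `t`: where `1 - t * w = 0` both sides are `0` by the `x / 0 = 0` convention.
lemma whm_inv_one_sub (t w : ℝ) (hw : w ≠ 1) : whm t (1 - w)⁻¹ = (1 - t * w)⁻¹ := by
  have hx : (1 - w)⁻¹ ≠ 0 := inv_ne_zero (sub_ne_zero.2 hw.symm)
  have hden : (1 - t) * (1 - w)⁻¹ + t = (1 - w)⁻¹ * (1 - t * w) := by
    field_simp [sub_ne_zero.2 hw.symm]
    ring
  rw [whm, if_neg (fun h => hx h.2), hden, div_mul_cancel_left₀ hx]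

section Moments

variable {α : Type*} [MeasurableSpace α] {f : α → ℝ}

lemma hasSum_integral_inv_one_sub_mul (μ : Measure α) [IsFiniteMeasure μ]
    (hf : AEStronglyMeasurable f μ) (hf1 : ∀ᵐ a ∂μ, |f a| ≤ 1) {w : ℝ} (hw : |w| < 1) :
    HasSum (fun n => (∫ a, f a ^ n ∂μ) * w ^ n) (∫ a, (1 - f a * w)⁻¹ ∂μ) := by
  simp_rw [← integral_mul_const, ← mul_pow]
  refine hasSum_integral_of_dominated_convergence (fun n _ => |w| ^ n)
    (fun n => (hf.mul_const w).pow n) (fun n => ?_) (ae_of_all _ fun _ => ?_)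
    (integrable_const _) ?_
  · filter_upwards [hf1] with a ha
    rw [norm_pow, Real.norm_eq_abs, abs_mul]
    gcongr
    exact mul_le_of_le_one_left (abs_nonneg w) ha
  · exact summable_geometric_of_lt_one (abs_nonneg w) hw
  · filter_upwards [hf1] with a ha
    refine hasSum_geometric_of_abs_lt_one ?_
    rw [abs_mul]
    exact (mul_le_of_le_one_left (abs_nonneg w) ha).trans_lt hw

lemma hasFPowerSeriesOnBall_integral_inv_one_sub_mul (μ : Measure α) [IsFiniteMeasure μ]
    (hf : AEStronglyMeasurable f μ) (hf1 : ∀ᵐ a ∂μ, |f a| ≤ 1) :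
    HasFPowerSeriesOnBall (fun w => ∫ a, (1 - f a * w)⁻¹ ∂μ)
      (.ofScalars ℝ fun n => ∫ a, f a ^ n ∂μ) 0 1 where
  r_le := by
    refine FormalMultilinearSeries.le_radius_of_bound _ (μ.real Set.univ) fun n => ?_
    rw [FormalMultilinearSeries.ofScalars_norm, NNReal.coe_one, one_pow, mul_one]
    refine (norm_integral_le_of_norm_le_const ?_).trans_eq (one_mul _)
    filter_upwards [hf1] with a ha
    rw [norm_pow, Real.norm_eq_abs]
    exact pow_le_one₀ (abs_nonneg _) ha
  r_pos := one_pos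
  hasSum {w} hw := by
    rw [← ENNReal.coe_one, Metric.eball_coe, Metric.mem_ball, dist_zero_right,
      Real.norm_eq_abs] at hw
    simp_rw [FormalMultilinearSeries.ofScalars_apply_eq, smul_eq_mul, zero_add]
    exact hasSum_integral_inv_one_sub_mul μ hf hf1 hw

lemma integral_pow_eq_of_integral_inv_one_sub_mul_eventuallyEq {μ ν : Measure α}
    [IsFiniteMeasure μ] [IsFiniteMeasure ν]
    (hfμ : AEStronglyMeasurable f μ) (hfν : AEStronglyMeasurable f ν)
    (hf1μ : ∀ᵐ a ∂μ, |f a| ≤ 1) (hf1ν : ∀ᵐ a ∂ν, |f a| ≤ 1)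
    (h : (fun w => ∫ a, (1 - f a * w)⁻¹ ∂μ) =ᶠ[𝓝 0] fun w => ∫ a, (1 - f a * w)⁻¹ ∂ν)
    (n : ℕ) :
    ∫ a, f a ^ n ∂μ = ∫ a, f a ^ n ∂ν := by
  have hμ := (hasFPowerSeriesOnBall_integral_inv_one_sub_mul μ hfμ hf1μ).hasFPowerSeriesAt
  have hν := (hasFPowerSeriesOnBall_integral_inv_one_sub_mul ν hfν hf1ν).hasFPowerSeriesAt
  exact congrFun (FormalMultilinearSeries.ofScalars_series_injective ℝ ℝ
    (hμ.eq_formalMultilinearSeries (hν.congr h.symm))) n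

end Moments

lemma ContinuousMap.continuous_integral {X : Type*} [TopologicalSpace X] [CompactSpace X]
    [MeasurableSpace X] [BorelSpace X] (μ : Measure X) [IsFiniteMeasure μ] :
    Continuous fun f : C(X, ℝ) => ∫ x, f x ∂μ := by
  have hLp : (fun f : C(X, ℝ) => ∫ x, f x ∂μ) =
      fun f => ∫ x, ContinuousMap.toLp 1 μ ℝ f x ∂μ :=
    funext fun f => integral_congr_ae (ContinuousMap.coeFn_toLp μ f).symm
  rw [hLp]
  exact MeasureTheory.continuous_integral.comp (ContinuousMap.toLp 1 μ ℝ).continuous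

theorem MeasureTheory.ext_of_forall_mem_dense_integral_eq {X : Type*} [TopologicalSpace X]
    [CompactSpace X] [HasOuterApproxClosed X] [MeasurableSpace X] [BorelSpace X]
    {μ ν : Measure X} [IsFiniteMeasure μ] [IsFiniteMeasure ν] {S : Set C(X, ℝ)} (hS : Dense S)
    (h : ∀ g ∈ S, ∫ x, g x ∂μ = ∫ x, g x ∂ν) : μ = ν := by
  have hclosed : IsClosed {g : C(X, ℝ) | ∫ x, g x ∂μ = ∫ x, g x ∂ν} :=
    isClosed_eq (ContinuousMap.continuous_integral μ) (ContinuousMap.continuous_integral ν)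
  refine ext_of_forall_integral_eq_of_IsFiniteMeasure fun f => ?_
  exact hclosed.closure_subset_iff.2 h (hS f.toContinuousMap)

theorem MeasureTheory.ext_of_forall_integral_pow_eq {s : Set ℝ} [CompactSpace s]
    {μ ν : Measure s} [IsFiniteMeasure μ] [IsFiniteMeasure ν]
    (h : ∀ n : ℕ, ∫ x, (x : ℝ) ^ n ∂μ = ∫ x, (x : ℝ) ^ n ∂ν) : μ = ν := by
  have hint : ∀ (ρ : Measure s) [IsFiniteMeasure ρ] (n : ℕ),
      Integrable (fun x : s => (x : ℝ) ^ n) ρ :=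
    fun ρ _ n => (continuous_subtype_val.pow n).integrable_of_hasCompactSupport
      (HasCompactSupport.of_compactSpace _)
  have hpoly : ∀ (ρ : Measure s) [IsFiniteMeasure ρ] (p : Polynomial ℝ),
      ∫ x, p.eval (x : ℝ) ∂ρ =
        ∑ i ∈ Finset.range (p.natDegree + 1), p.coeff i * ∫ x, (x : ℝ) ^ i ∂ρ := by
    intro ρ _ p
    simp_rw [Polynomial.eval_eq_sum_range, ← integral_const_mul]
    exact integral_finsetSum _ fun i _ => (hint ρ i).const_mul _
  have hdense : Dense (polynomialFunctions s : Set C(s, ℝ)) := by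
    rw [dense_iff_closure_eq, ← Subalgebra.topologicalClosure_coe,
      polynomialFunctions.topologicalClosure]
    rfl
  refine ext_of_forall_mem_dense_integral_eq hdense ?_
  rintro _ ⟨p, -, rfl⟩
  simp [hpoly μ, hpoly ν, h]

theorem stmt1 (μ₁ μ₂ : Measure (Set.Icc (0 : ℝ) 1))
    [IsFiniteMeasure μ₁] [IsFiniteMeasure μ₂]
    (h : ∀ x : ℝ, 0 ≤ x →
      (∫ t : Set.Icc (0 : ℝ) 1, whm (t : ℝ) x ∂μ₁) =
        ∫ t : Set.Icc (0 : ℝ) 1, whm (t : ℝ) x ∂μ₂) :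
    μ₁ = μ₂ := by
  have hval : ∀ (μ : Measure (Set.Icc (0 : ℝ) 1)),
      AEStronglyMeasurable (fun t : Set.Icc (0 : ℝ) 1 => (t : ℝ)) μ :=
    fun _ => continuous_subtype_val.aestronglyMeasurable
  have hval1 : ∀ (μ : Measure (Set.Icc (0 : ℝ) 1)),
      ∀ᵐ t : Set.Icc (0 : ℝ) 1 ∂μ, |(t : ℝ)| ≤ 1 :=
    fun _ => ae_of_all _ fun t => abs_le.2 ⟨by linarith [t.2.1], t.2.2⟩
  have hgen : (fun w => ∫ t : Set.Icc (0 : ℝ) 1, (1 - (t : ℝ) * w)⁻¹ ∂μ₁)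
      =ᶠ[𝓝 0] fun w => ∫ t : Set.Icc (0 : ℝ) 1, (1 - (t : ℝ) * w)⁻¹ ∂μ₂ := by
    filter_upwards [Iio_mem_nhds one_pos] with w hw
    simp_rw [← whm_inv_one_sub _ w hw.ne]
    exact h _ (inv_nonneg.2 (sub_nonneg.2 hw.le))
  exact ext_of_forall_integral_pow_eq
    (integral_pow_eq_of_integral_inv_one_sub_mul_eventuallyEq (hval μ₁) (hval μ₂)
      (hval1 μ₁) (hval1 μ₂) hgen)
end

section
/- For every x ∈ [0,∞), log(1+x) = ∫_{1/2}^{1} (1/t) · x/((1-t)·x + t) dt; that is, the associated measure of the operator monotone function x ↦ log(1+x) is the measure on [0,1] with density t ↦ (1/t)·χ_{[1/2,1]}(t) with respect to Lebesgue measure. -/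
open MeasureTheory Real

/- The integrand is the derivative of `t ↦ log t - log ((1 - t) x + t)`, so the integral is
evaluated by the fundamental theorem of calculus: the antiderivative vanishes at `t = 1` and
equals `log (1/2) - log ((1 + x)/2) = -log (1 + x)` at `t = 1/2`. -/

lemma one_sub_mul_add_self_pos {x t : ℝ} (hx : 0 ≤ x) (ht₀ : 0 < t) (ht₁ : t ≤ 1) :
    0 < (1 - t) * x + t := by
  nlinarith

lemma hasDerivAt_log_sub_log_one_sub_mul_add_self {x t : ℝ} (ht : 0 < t)
    (hd : 0 < (1 - t) * x + t) :
    HasDerivAt (fun s => log s - log ((1 - s) * x + s))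
      ((1 / t) * (x / ((1 - t) * x + t))) t := by
  have hdenom : HasDerivAt (fun s : ℝ => (1 - s) * x + s) (-1 * x + 1) t :=
    (((hasDerivAt_id t).const_sub 1).mul_const x).add (hasDerivAt_id t)
  refine ((hasDerivAt_log ht.ne').sub (hdenom.log hd.ne')).congr_deriv ?_
  rw [div_mul_div_comm, one_mul, inv_eq_one_div, div_sub_div _ _ ht.ne' hd.ne']
  congr 1
  ring

lemma integral_one_div_mul_harmonicMean {x a b : ℝ} (hx : 0 ≤ x) (ha : 0 < a) (hab : a ≤ b)
    (hb : b ≤ 1) :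
    ∫ t in a..b, (1 / t) * (x / ((1 - t) * x + t)) =
      (log b - log ((1 - b) * x + b)) - (log a - log ((1 - a) * x + a)) := by
  have hpos : ∀ t ∈ Set.uIcc a b, 0 < t ∧ 0 < (1 - t) * x + t := by
    intro t ht
    rw [Set.uIcc_of_le hab] at ht
    have ht₀ : 0 < t := ha.trans_le ht.1
    exact ⟨ht₀, one_sub_mul_add_self_pos hx ht₀ (ht.2.trans hb)⟩
  have hint : IntervalIntegrable (fun t => (1 / t) * (x / ((1 - t) * x + t))) volume a b :=
    ContinuousOn.intervalIntegrable <|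
      (continuousOn_const.div continuousOn_id fun t ht => (hpos t ht).1.ne').mul
        (continuousOn_const.div (by fun_prop) fun t ht => (hpos t ht).2.ne')
  exact intervalIntegral.integral_eq_sub_of_hasDerivAt
    (fun t ht => hasDerivAt_log_sub_log_one_sub_mul_add_self (hpos t ht).1 (hpos t ht).2) hint

theorem stmt5 (x : ℝ) (hx : 0 ≤ x) :
    Real.log (1 + x) = ∫ t in (1 / 2 : ℝ)..1, (1 / t) * (x / ((1 - t) * x + t)) := by
  rw [integral_one_div_mul_harmonicMean hx (by norm_num) (by norm_num) le_rfl,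
    show ((1 : ℝ) - 1 / 2) * x + 1 / 2 = (1 + x) / 2 by ring,
    log_div (by linarith : 1 + x ≠ 0) two_ne_zero, one_div, log_inv]
  norm_num
end

section
/- For every α ∈ (0,1) and every x ∈ (0,∞), x^α = (sin(απ)/π) · ∫_{0}^{∞} x·λ^{α-1}/(x+λ) dλ. -/
/-!
The substitution `λ = x u` reduces the integral to `x ^ α * ∫ u ^ (α - 1) / (1 + u)`, and the
substitution `u = t / (1 - t)` turns the latter into the Beta integral `B(α, 1 - α)`, which equals
`Γ(α) Γ(1 - α) = π / sin (π α)` by the reflection formula.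
-/

open MeasureTheory Real Set

lemma integral_Ioo_rpow_mul_one_sub_rpow {a b : ℝ} (ha : 0 < a) (hb : 0 < b) :
    ∫ t in Ioo (0 : ℝ) 1, t ^ (a - 1) * (1 - t) ^ (b - 1) = Gamma a * Gamma b / Gamma (a + b) := by
  have hcast : Complex.betaIntegral a b
      = ((∫ t in (0 : ℝ)..1, t ^ (a - 1) * (1 - t) ^ (b - 1) : ℝ) : ℂ) := by
    rw [Complex.betaIntegral, ← intervalIntegral.integral_ofReal]
    refine intervalIntegral.integral_congr fun t ht => ?_
    rw [uIcc_of_le zero_le_one] at ht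
    simp only [Complex.ofReal_mul, Complex.ofReal_cpow ht.1, Complex.ofReal_cpow (sub_nonneg.2 ht.2)]
    push_cast
    ring_nf
  rw [← integral_Ioc_eq_integral_Ioo, ← intervalIntegral.integral_of_le zero_le_one,
    ← ProbabilityTheory.beta, ProbabilityTheory.beta_eq_betaIntegralReal a b ha hb, hcast,
    Complex.ofReal_re]

lemma integral_Ioi_eq_integral_Ioo_div_one_sub (f : ℝ → ℝ) :
    ∫ u in Ioi (0 : ℝ), f u = ∫ t in Ioo (0 : ℝ) 1, f (t / (1 - t)) / (1 - t) ^ 2 := by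
  have himg : (fun t : ℝ => t / (1 - t)) '' Ioo 0 1 = Ioi 0 := by
    ext u
    refine ⟨?_, fun hu => ⟨u / (1 + u), ?_, ?_⟩⟩
    · rintro ⟨t, ⟨ht0, ht1⟩, rfl⟩
      exact div_pos ht0 (sub_pos.2 ht1)
    · have hu : 0 < u := hu
      exact ⟨by positivity, (div_lt_one (by positivity)).2 (by linarith)⟩
    · have hu : 0 < u := hu
      field_simp
      ring
  have hinj : InjOn (fun t : ℝ => t / (1 - t)) (Ioo 0 1) := by
    rintro s ⟨-, hs1⟩ t ⟨-, ht1⟩ hst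
    have hs : 1 - s ≠ 0 := by linarith
    have ht : 1 - t ≠ 0 := by linarith
    field_simp at hst
    linarith
  have hderiv : ∀ t ∈ Ioo (0 : ℝ) 1,
      HasDerivWithinAt (fun t : ℝ => t / (1 - t)) (1 / (1 - t) ^ 2) (Ioo 0 1) t := by
    rintro t ⟨-, ht1⟩
    have h : HasDerivAt (fun t : ℝ => t / (1 - t)) ((1 * (1 - t) - t * -1) / (1 - t) ^ 2) t :=
      (hasDerivAt_id' t).div ((hasDerivAt_id' t).const_sub 1) (sub_pos.2 ht1).ne'
    rw [show 1 * (1 - t) - t * -1 = (1 : ℝ) by ring] at h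
    exact h.hasDerivWithinAt
  rw [← himg, integral_image_eq_integral_abs_deriv_smul measurableSet_Ioo hderiv hinj]
  refine setIntegral_congr_fun measurableSet_Ioo fun t _ => ?_
  rw [abs_of_nonneg (by positivity), smul_eq_mul, one_div_mul_eq_div]

lemma integral_Ioi_rpow_div_one_add_rpow {a b : ℝ} (ha : 0 < a) (hb : 0 < b) :
    ∫ u in Ioi (0 : ℝ), u ^ (a - 1) / (1 + u) ^ (a + b) = Gamma a * Gamma b / Gamma (a + b) := by
  rw [integral_Ioi_eq_integral_Ioo_div_one_sub, ← integral_Ioo_rpow_mul_one_sub_rpow ha hb]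
  refine setIntegral_congr_fun measurableSet_Ioo fun t ⟨ht0, ht1⟩ => ?_
  have hs : 0 < 1 - t := sub_pos.2 ht1
  have hsplit : (1 - t) ^ (a + b) = (1 - t) ^ (b - 1) * (1 - t) ^ (a - 1) * (1 - t) ^ 2 := by
    rw [← rpow_add hs, ← rpow_natCast, ← rpow_add hs]
    ring_nf
  have hone_add : 1 + t / (1 - t) = (1 - t)⁻¹ := by
    field_simp
    ring
  rw [hone_add, inv_rpow hs.le, div_rpow ht0.le hs.le, hsplit]
  have hpow_ne : (1 - t) ^ (a - 1) ≠ 0 := (rpow_pos_of_pos hs _).ne'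
  field_simp

lemma integral_Ioi_rpow_sub_one_div_one_add {α : ℝ} (hα : α ∈ Ioo (0 : ℝ) 1) :
    ∫ u in Ioi (0 : ℝ), u ^ (α - 1) / (1 + u) = π / sin (π * α) := by
  have h := integral_Ioi_rpow_div_one_add_rpow hα.1 (sub_pos.2 hα.2)
  simpa only [add_sub_cancel, rpow_one, Gamma_one, div_one, Gamma_mul_Gamma_one_sub] using h

lemma integral_Ioi_rpow_sub_one_div_add {x : ℝ} (hx : 0 < x) (a : ℝ) :
    ∫ l in Ioi (0 : ℝ), l ^ (a - 1) / (x + l)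
      = x ^ (a - 1) * ∫ u in Ioi (0 : ℝ), u ^ (a - 1) / (1 + u) := by
  have hscale := integral_comp_mul_left_Ioi (fun l => l ^ (a - 1) / (x + l)) 0 hx
  have hpoint : ∀ u ∈ Ioi (0 : ℝ), (x * u) ^ (a - 1) / (x + x * u)
      = x⁻¹ * x ^ (a - 1) * (u ^ (a - 1) / (1 + u)) := by
    intro u (hu : 0 < u)
    rw [mul_rpow hx.le hu.le, show x + x * u = x * (1 + u) by ring]
    field_simp
  rw [setIntegral_congr_fun measurableSet_Ioi hpoint, integral_const_mul, mul_zero, smul_eq_mul,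
    mul_assoc] at hscale
  exact (mul_left_cancel₀ (inv_ne_zero hx.ne') hscale).symm

theorem stmt6 (α : ℝ) (hα : α ∈ Set.Ioo (0 : ℝ) 1) (x : ℝ) (hx : 0 < x) :
    x ^ α = Real.sin (α * π) / π * ∫ l in Set.Ioi (0 : ℝ), x * l ^ (α - 1) / (x + l) := by
  have hsin : sin (α * π) ≠ 0 :=
    (sin_pos_of_pos_of_lt_pi (by nlinarith [pi_pos, hα.1]) (by nlinarith [pi_pos, hα.2])).ne'
  simp_rw [mul_div_assoc]
  rw [integral_const_mul, integral_Ioi_rpow_sub_one_div_add hx,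
    integral_Ioi_rpow_sub_one_div_one_add hα, rpow_sub_one hx.ne', mul_comm π α]
  field_simp
end

section
/- For every α ∈ (0,1) and every x ∈ [0,∞), x^α = (sin(απ)/π) · ∫_{0}^{1} (1/(t^{1-α}·(1-t)^{α})) · x/((1-t)·x + t) dt; that is, the associated measure of the operator monotone function x ↦ x^α is the measure on [0,1] with density t ↦ (sin(απ)/π) · t^{α-1}(1-t)^{-α} with respect to Lebesgue measure. -/
/-!
The substitution `u = t / ((1 - t) * x + t)` maps `(0, 1)` onto itself, and turns the weight
`t ^ (α - 1) * (1 - t) ^ (-α)` times the harmonic mean `x / ((1 - t) * x + t)` into `x ^ α` times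
the same weight in `u`. Hence the integral is `x ^ α` times the beta integral
`B(α, 1 - α) = Γ(α) Γ(1 - α) = π / sin (π α)`.
-/

open MeasureTheory Real Set

theorem integral_rpow_mul_one_sub_rpow {a b : ℝ} (ha : 0 < a) (hb : 0 < b) :
    ∫ t in (0 : ℝ)..1, t ^ (a - 1) * (1 - t) ^ (b - 1) = Gamma a * Gamma b / Gamma (a + b) := by
  have hbeta := Complex.betaIntegral_eq_Gamma_mul_div a b (by simpa) (by simpa)
  rw [← Complex.ofReal_add, Complex.Gamma_ofReal, Complex.Gamma_ofReal, Complex.Gamma_ofReal,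
    Complex.betaIntegral] at hbeta
  rw [← Complex.ofReal_inj, ← intervalIntegral.integral_ofReal]
  push_cast
  rw [← hbeta]
  refine intervalIntegral.integral_congr fun t ht => ?_
  rw [uIcc_of_le zero_le_one] at ht
  simp only [Complex.ofReal_cpow ht.1, Complex.ofReal_cpow (sub_nonneg.2 ht.2)]
  push_cast
  rfl

noncomputable def betaSubst (x t : ℝ) : ℝ := t / ((1 - t) * x + t)

section betaSubst

variable {x y t : ℝ}

lemma betaSubst_denom_pos (hx : 0 ≤ x) (ht : t ∈ Ioo (0 : ℝ) 1) : 0 < (1 - t) * x + t := by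
  nlinarith [ht.1, ht.2]

lemma one_sub_betaSubst (hD : (1 - t) * x + t ≠ 0) :
    1 - betaSubst x t = (1 - t) * x / ((1 - t) * x + t) := by
  rw [betaSubst]; field_simp; ring

lemma betaSubst_mem_Ioo (hx : 0 < x) (ht : t ∈ Ioo (0 : ℝ) 1) : betaSubst x t ∈ Ioo (0 : ℝ) 1 := by
  have hD := betaSubst_denom_pos hx.le ht
  refine ⟨div_pos ht.1 hD, (div_lt_one hD).2 ?_⟩
  nlinarith [mul_pos (sub_pos.2 ht.2) hx]

lemma betaSubst_one (t : ℝ) : betaSubst 1 t = t := by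
  simp [betaSubst]

/-- The substitutions compose multiplicatively in `x`, so `betaSubst x⁻¹` inverts `betaSubst x`. -/
lemma betaSubst_betaSubst (hx : 0 < x) (ht : t ∈ Ioo (0 : ℝ) 1) :
    betaSubst y (betaSubst x t) = betaSubst (x * y) t := by
  have hD := (betaSubst_denom_pos hx.le ht).ne'
  rw [betaSubst, one_sub_betaSubst hD, betaSubst, betaSubst]
  field_simp

lemma injOn_betaSubst (hx : 0 < x) : InjOn (betaSubst x) (Ioo 0 1) := fun s hs t ht hst => by
  rw [← betaSubst_one s, ← betaSubst_one t, ← mul_inv_cancel₀ hx.ne', ← betaSubst_betaSubst hx hs,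
    ← betaSubst_betaSubst hx ht, hst]

lemma image_betaSubst_Ioo (hx : 0 < x) : betaSubst x '' Ioo 0 1 = Ioo 0 1 := by
  refine (mapsTo_iff_image_subset.1 fun t ht => betaSubst_mem_Ioo hx ht).antisymm fun u hu => ?_
  refine ⟨betaSubst x⁻¹ u, betaSubst_mem_Ioo (inv_pos.2 hx) hu, ?_⟩
  change betaSubst x (betaSubst x⁻¹ u) = u
  rw [betaSubst_betaSubst (inv_pos.2 hx) hu, inv_mul_cancel₀ hx.ne', betaSubst_one]

lemma hasDerivAt_betaSubst (hD : (1 - t) * x + t ≠ 0) :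
    HasDerivAt (betaSubst x) (x / ((1 - t) * x + t) ^ 2) t := by
  have hden : HasDerivAt (fun s => (1 - s) * x + s) (1 - x) t :=
    ((((hasDerivAt_id' t).const_sub 1).mul_const x).add (hasDerivAt_id' t)).congr_deriv (by ring)
  exact ((hasDerivAt_id' t).div hden hD).congr_deriv (by ring)

theorem integral_Ioo_eq_integral_betaSubst (hx : 0 < x) (f : ℝ → ℝ) :
    ∫ u in Ioo (0 : ℝ) 1, f u =
      ∫ t in Ioo (0 : ℝ) 1, x / ((1 - t) * x + t) ^ 2 * f (betaSubst x t) := by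
  have hderiv : ∀ t ∈ Ioo (0 : ℝ) 1,
      HasDerivWithinAt (betaSubst x) (x / ((1 - t) * x + t) ^ 2) (Ioo 0 1) t := fun t ht =>
    (hasDerivAt_betaSubst (betaSubst_denom_pos hx.le ht).ne').hasDerivWithinAt
  conv_lhs => rw [← image_betaSubst_Ioo hx]
  rw [integral_image_eq_integral_abs_deriv_smul measurableSet_Ioo hderiv (injOn_betaSubst hx)]
  refine setIntegral_congr_fun measurableSet_Ioo fun t ht => ?_
  rw [smul_eq_mul, abs_of_nonneg (div_nonneg hx.le (sq_nonneg _))]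

end betaSubst

noncomputable def powerWeight (α t : ℝ) : ℝ := t ^ (α - 1) * (1 - t) ^ (-α)

theorem integral_powerWeight {α : ℝ} (hα : α ∈ Ioo (0 : ℝ) 1) :
    ∫ t in Ioo (0 : ℝ) 1, powerWeight α t = π / sin (π * α) := by
  have h := integral_rpow_mul_one_sub_rpow hα.1 (sub_pos.2 hα.2)
  rwa [show 1 - α - 1 = -α by ring, add_sub_cancel, Gamma_one, div_one, Gamma_mul_Gamma_one_sub,
    intervalIntegral.integral_of_le zero_le_one, integral_Ioc_eq_integral_Ioo] at h

lemma powerWeight_betaSubst (α : ℝ) {x t : ℝ} (hx : 0 < x) (ht : t ∈ Ioo (0 : ℝ) 1) :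
    x / ((1 - t) * x + t) ^ 2 * powerWeight α (betaSubst x t) =
      x ^ (-α) * (powerWeight α t * (x / ((1 - t) * x + t))) := by
  set D := (1 - t) * x + t
  have hD : 0 < D := betaSubst_denom_pos hx.le ht
  have hDpow : D ^ (α - 1) * D ^ (-α) = D⁻¹ := by
    rw [← rpow_add hD, show α - 1 + -α = -1 by ring, rpow_neg_one]
  rw [powerWeight, powerWeight, one_sub_betaSubst hD.ne', betaSubst, div_rpow ht.1.le hD.le,
    div_rpow (mul_pos (sub_pos.2 ht.2) hx).le hD.le, mul_rpow (sub_pos.2 ht.2).le hx.le,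
    div_mul_div_comm, hDpow]
  field_simp

theorem integral_powerWeight_mul_harmonic (α : ℝ) {x : ℝ} (hx : 0 < x) :
    ∫ t in Ioo (0 : ℝ) 1, powerWeight α t * (x / ((1 - t) * x + t)) =
      x ^ α * ∫ t in Ioo (0 : ℝ) 1, powerWeight α t := by
  rw [integral_Ioo_eq_integral_betaSubst hx (powerWeight α), ← integral_const_mul]
  refine setIntegral_congr_fun measurableSet_Ioo fun t ht => ?_
  rw [powerWeight_betaSubst α hx ht, ← mul_assoc, ← rpow_add hx, add_neg_cancel, rpow_zero, one_mul]

theorem stmt7 (α : ℝ) (hα : α ∈ Set.Ioo (0 : ℝ) 1) (x : ℝ) (hx : 0 ≤ x) :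
    x ^ α = Real.sin (α * π) / π *
      ∫ t in (0 : ℝ)..1, (1 / (t ^ (1 - α) * (1 - t) ^ α)) * (x / ((1 - t) * x + t)) := by
  rcases hx.eq_or_lt with rfl | hx
  · simp [zero_rpow hα.1.ne']
  have hintegrand : ∀ t ∈ Ioo (0 : ℝ) 1,
      1 / (t ^ (1 - α) * (1 - t) ^ α) * (x / ((1 - t) * x + t)) =
        powerWeight α t * (x / ((1 - t) * x + t)) := fun t ht => by
    rw [powerWeight, show α - 1 = -(1 - α) by ring, rpow_neg ht.1.le,
      rpow_neg (sub_pos.2 ht.2).le, one_div, mul_inv]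
  have hsin : sin (α * π) ≠ 0 :=
    (sin_pos_of_pos_of_lt_pi (mul_pos hα.1 pi_pos) (mul_lt_of_lt_one_left pi_pos hα.2)).ne'
  rw [intervalIntegral.integral_of_le zero_le_one, integral_Ioc_eq_integral_Ioo,
    setIntegral_congr_fun measurableSet_Ioo hintegrand, integral_powerWeight_mul_harmonic α hx,
    integral_powerWeight hα, mul_comm π α]
  field_simp
end

section
/- For every x ∈ (0,∞) with x ≠ 1, (x·log(x))/(x-1) = ∫_{0}^{1} x/((1-t)·x + t) dt; that is, the associated measure of the operator monotone function x ↦ x·log(x)/(x-1) is Lebesgue measure on [0,1]. -/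
open MeasureTheory Real

/-! The affine substitution `s = (1 - t) a + t b` turns `∫₀¹ ((1 - t) a + t b)⁻¹ dt` into
`(b - a)⁻¹ ∫ₐᵇ s⁻¹ ds = log (b / a) / (b - a)`; for `a = x`, `b = 1` this is `log x / (x - 1)`,
and multiplying by `x` gives the harmonic-mean integral. -/

open intervalIntegral in
theorem integral_inv_convex_combination {a b : ℝ} (hab : a ≠ b) (h : (0 : ℝ) ∉ Set.uIcc a b) :
    ∫ t in (0 : ℝ)..1, ((1 - t) * a + t * b)⁻¹ = Real.log (b / a) / (b - a) := by
  have hba : b - a ≠ 0 := sub_ne_zero.mpr hab.symm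
  have haffine : ∀ t : ℝ, (1 - t) * a + t * b = (b - a) * t + a := fun t ↦ by ring
  simp_rw [haffine]
  rw [integral_comp_mul_add (fun s ↦ s⁻¹) hba, mul_zero, zero_add, mul_one, sub_add_cancel,
    integral_inv h, smul_eq_mul, inv_mul_eq_div]

theorem stmt10 (x : ℝ) (hx : 0 < x) (hx1 : x ≠ 1) :
    x * Real.log x / (x - 1) = ∫ t in (0 : ℝ)..1, x / ((1 - t) * x + t) := by
  have hintegrand : ∀ t : ℝ, x / ((1 - t) * x + t) = x * ((1 - t) * x + t * 1)⁻¹ := fun t ↦ by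
    rw [mul_one, div_eq_mul_inv]
  simp_rw [hintegrand]
  rw [intervalIntegral.integral_const_mul,
    integral_inv_convex_combination hx1 (Set.notMem_uIcc_of_lt hx one_pos), one_div, Real.log_inv,
    ← neg_sub x 1, neg_div_neg_eq, mul_div_assoc]
end

section
/- A continuous function f : [0,∞) → [0,∞) is operator monotone if and only if it is operator concave. -/
/-!
Concave ⇒ monotone: if `0 ≤ A ≤ B` and `0 < s < 1`, then `B = s A + (1 - s) C` with
`C = (1 - s)⁻¹ (B - s A) ≥ 0`, so concavity and `f ≥ 0` give `s f(A) ≤ f(B)`; let `s → 1`.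

Monotone ⇒ concave (Hansen–Pedersen): conjugating `diag(A, B)` by the rotation
`[[√s, √(1-s)], [-√(1-s), √s]]` gives a positive block matrix `M` with
`M₁₁ = s A + (1 - s) B` and `f(M)₁₁ = s f(A) + (1 - s) f(B)`, so it suffices that
`f(M)₁₁ ≤ f(M₁₁)` for positive `M = [[X, R], [R*, Y]]`. For every `ε > 0`,
`M ≤ diag(X + ε R R*, Y + ε⁻¹)`, hence monotonicity gives `f(M)₁₁ ≤ f(X + ε R R*)`, and
continuity of the functional calculus lets `ε → 0`.
-/

open MeasureTheory Real ComplexOrder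

/-- `f` is operator monotone on `[0,∞)`: for all `n` and all positive semidefinite complex
`n × n` matrices `A ≤ B` (Loewner order), `f(A) ≤ f(B)` via the continuous functional
calculus. -/
def OperatorMonotone (f : ℝ → ℝ) : Prop :=
  ∀ (n : ℕ) (A B : Matrix (Fin n) (Fin n) ℂ),
    A.PosSemidef → B.PosSemidef → (B - A).PosSemidef →
    (cfc f B - cfc f A).PosSemidef

/-- `f` is operator concave on `[0,∞)`: for all `n`, all positive semidefinite complex
`n × n` matrices `A, B` and all `s ∈ [0,1]`,
`f(s•A + (1-s)•B) ≥ s•f(A) + (1-s)•f(B)` in the Loewner order. -/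
def OperatorConcave (f : ℝ → ℝ) : Prop :=
  ∀ (n : ℕ) (A B : Matrix (Fin n) (Fin n) ℂ),
    A.PosSemidef → B.PosSemidef → ∀ s : ℝ, s ∈ Set.Icc (0 : ℝ) 1 →
    (cfc f (s • A + (1 - s) • B) - (s • cfc f A + (1 - s) • cfc f B)).PosSemidef

open scoped MatrixOrder Matrix.Norms.L2Operator
open Matrix Set Filter Topology

section CStarAlgebra

variable {A : Type*} [CStarAlgebra A] [PartialOrder A] [StarOrderedRing A]

lemma le_cfc_of_forall_pos_le_cfc_add_smul {f : ℝ → ℝ} (hf : ContinuousOn f (Ici 0))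
    {a b c : A} (ha : 0 ≤ a) (hb : 0 ≤ b)
    (h : ∀ ε : ℝ, 0 < ε → c ≤ cfc f (a + ε • b)) : c ≤ cfc f a := by
  -- a continuous extension of `f` to `ℝ`, to which continuity of `cfc` in its argument applies
  set g : ℝ → ℝ := fun x ↦ f (max x 0)
  have hg : Continuous g :=
    hf.comp_continuous (continuous_id.max continuous_const) fun x ↦ le_max_right x 0
  have hfg : ∀ {x : A}, 0 ≤ x → cfc f x = cfc g x := fun hx ↦
    cfc_congr fun t ht ↦ by simp [g, max_eq_left (spectrum_nonneg_of_nonneg hx ht)]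
  have hpath : ContinuousOn (fun ε : ℝ ↦ cfc g (a + ε • b)) univ :=
    ContinuousOn.cfc_of_mem_nhdsSet g univ_mem (by fun_prop)
      (fun ε _ ↦ ha.isSelfAdjoint.add ((IsSelfAdjoint.all ε).smul hb.isSelfAdjoint))
      hg.continuousOn
  have hlim : Tendsto (fun ε : ℝ ↦ cfc g (a + ε • b)) (𝓝[>] 0) (𝓝 (cfc f a)) := by
    rw [hfg ha]
    simpa using (hpath.continuousAt (x := 0) univ_mem).tendsto.mono_left nhdsWithin_le_nhds
  refine ge_of_tendsto hlim (eventually_nhdsWithin_of_forall fun ε (hε : 0 < ε) ↦ ?_)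
  rw [← hfg (add_nonneg ha (smul_nonneg hε.le hb))]
  exact h ε hε

end CStarAlgebra

namespace Matrix

lemma toBlocks₁₁_mono {𝕜 m n : Type*} [RCLike 𝕜] {P Q : Matrix (m ⊕ n) (m ⊕ n) 𝕜}
    (h : P ≤ Q) : P.toBlocks₁₁ ≤ Q.toBlocks₁₁ :=
  le_iff.mpr ((le_iff.mp h).submatrix Sum.inl)

variable {𝕜 m n : Type*} [RCLike 𝕜] [Fintype m] [Fintype n] [DecidableEq m] [DecidableEq n]

def reindexStarAlgEquiv (e : m ≃ n) : Matrix m m 𝕜 ≃⋆ₐ[𝕜] Matrix n n 𝕜 :=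
  .ofAlgEquiv (reindexAlgEquiv 𝕜 𝕜 e) fun A ↦ by simp [star_eq_conjTranspose]

lemma cfc_reindex (f : ℝ → ℝ) (e : m ≃ n) {A : Matrix m m 𝕜} (hA : A.IsHermitian) :
    cfc f (reindex e e A) = reindex e e (cfc f A) :=
  (StarAlgHomClass.map_cfc (S := 𝕜) (reindexStarAlgEquiv e) f A
    (A.finite_real_spectrum.continuousOn f) (continuous_id.matrix_reindex e e)
    hA.isSelfAdjoint (hA.submatrix e.symm).isSelfAdjoint).symm

def fromBlocksDiagStarAlgHom :
    Matrix m m 𝕜 × Matrix n n 𝕜 →⋆ₐ[𝕜] Matrix (m ⊕ n) (m ⊕ n) 𝕜 where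
  toFun AB := fromBlocks AB.1 0 0 AB.2
  map_one' := fromBlocks_one
  map_mul' _ _ := by simp [fromBlocks_multiply]
  map_zero' := by simp
  map_add' _ _ := by simp [fromBlocks_add]
  commutes' r := by simp [Algebra.algebraMap_eq_smul_one, ← fromBlocks_one, fromBlocks_smul]
  map_star' _ := by simp [star_eq_conjTranspose, fromBlocks_conjTranspose]

lemma fromBlocks_zero_zero_nonneg {A : Matrix m m 𝕜} {B : Matrix n n 𝕜} (hA : 0 ≤ A)
    (hB : 0 ≤ B) : 0 ≤ fromBlocks A 0 0 B :=
  map_nonneg fromBlocksDiagStarAlgHom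
    (show (0 : Matrix m m 𝕜 × Matrix n n 𝕜) ≤ (A, B) from ⟨hA, hB⟩)

lemma cfc_fromBlocks_zero_zero (f : ℝ → ℝ) {A : Matrix m m ℂ} {B : Matrix n n ℂ}
    (hA : A.IsHermitian) (hB : B.IsHermitian) :
    cfc f (fromBlocks A 0 0 B) = fromBlocks (cfc f A) 0 0 (cfc f B) := by
  -- instance search does not find this instance on the product
  have : ContinuousFunctionalCalculus ℝ (Matrix m m ℂ × Matrix n n ℂ) IsSelfAdjoint :=
    IsSelfAdjoint.instContinuousFunctionalCalculus
  have hAB : IsSelfAdjoint (A, B) := Prod.ext hA hB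
  have hspec : (spectrum ℝ A ∪ spectrum ℝ B).Finite :=
    A.finite_real_spectrum.union B.finite_real_spectrum
  have hmap := StarAlgHomClass.map_cfc (S := ℂ) fromBlocksDiagStarAlgHom f (A, B)
    (by rw [Prod.spectrum_eq]; exact hspec.continuousOn f)
    (continuous_fst.matrix_fromBlocks continuous_const continuous_const continuous_snd) hAB
    (hAB.map _)
  rw [cfc_map_prod (S := ℂ) f A B (hspec.continuousOn f)] at hmap
  exact hmap.symm

lemma cfc_unitary_conj (f : ℝ → ℝ) {U : Matrix m m 𝕜} (hU : U ∈ unitary (Matrix m m 𝕜))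
    {A : Matrix m m 𝕜} (hA : A.IsHermitian) :
    cfc f (U * A * star U) = U * cfc f A * star U :=
  (StarAlgHomClass.map_cfc (S := 𝕜) (Unitary.conjStarAlgAut 𝕜 _ ⟨U, hU⟩) f A
    (A.finite_real_spectrum.continuousOn f)
    ((continuous_const.mul continuous_id).mul continuous_const) hA.isSelfAdjoint
    (hA.isSelfAdjoint.map _)).symm

def blockRotation (c d : ℝ) : Matrix (m ⊕ m) (m ⊕ m) 𝕜 :=
  fromBlocks (c • 1) (d • 1) (-(d • 1)) (c • 1)

lemma blockRotation_mem_unitary {c d : ℝ} (h : c ^ 2 + d ^ 2 = 1) :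
    blockRotation c d ∈ unitary (Matrix (m ⊕ m) (m ⊕ m) 𝕜) := by
  have h' : (c * c + d * d) • (1 : Matrix m m 𝕜) = 1 := by rw [← sq, ← sq, h, one_smul]
  rw [Unitary.mem_iff]
  simp [blockRotation, star_eq_conjTranspose, fromBlocks_conjTranspose, fromBlocks_multiply,
    smul_smul, ← add_smul, mul_comm d c, add_comm (d * d), h', ← fromBlocks_one]

lemma toBlocks₁₁_blockRotation_conj (c d : ℝ) (A B : Matrix m m 𝕜) :
    (blockRotation c d * fromBlocks A 0 0 B * star (blockRotation c d)).toBlocks₁₁ =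
      c ^ 2 • A + d ^ 2 • B := by
  simp [blockRotation, star_eq_conjTranspose, fromBlocks_conjTranspose, fromBlocks_multiply,
    smul_smul, sq]

lemma fromBlocks_le_fromBlocks_add_smul {ε : ℝ} (hε : 0 < ε) (X : Matrix m m 𝕜)
    (R : Matrix m n 𝕜) (Y : Matrix n n 𝕜) :
    fromBlocks X R Rᴴ Y ≤ fromBlocks (X + ε • (R * Rᴴ)) 0 0 (Y + ε⁻¹ • 1) := by
  set W : Matrix (m ⊕ n) (n ⊕ n) 𝕜 := fromBlocks (ε • R) 0 (-1) 0
  calc fromBlocks X R Rᴴ Y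
      ≤ fromBlocks X R Rᴴ Y + ε⁻¹ • (W * Wᴴ) :=
        le_add_of_nonneg_right (smul_nonneg (inv_nonneg.mpr hε.le)
          (posSemidef_self_mul_conjTranspose W).nonneg)
    _ = fromBlocks (X + ε • (R * Rᴴ)) 0 0 (Y + ε⁻¹ • 1) := by
        simp [W, fromBlocks_conjTranspose, fromBlocks_multiply, fromBlocks_smul, fromBlocks_add,
          smul_smul, inv_mul_cancel_left₀ hε.ne', inv_mul_cancel₀ hε.ne']

end Matrix

section

variable {f : ℝ → ℝ} {m n : Type*} [Fintype m] [Fintype n] [DecidableEq m] [DecidableEq n]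

theorem OperatorMonotone.cfc_le_cfc (hf : OperatorMonotone f) {A B : Matrix m m ℂ}
    (hA : 0 ≤ A) (hAB : A ≤ B) : cfc f A ≤ cfc f B := by
  let e := Fintype.equivFin m
  have h := hf _ (reindex e e A) (reindex e e B) (hA.posSemidef.submatrix _)
    ((hA.trans hAB).posSemidef.submatrix _) ((le_iff.mp hAB).submatrix _)
  rw [cfc_reindex f e hA.posSemidef.isHermitian,
    cfc_reindex f e (hA.trans hAB).posSemidef.isHermitian] at h
  exact le_iff.mpr ((posSemidef_submatrix_equiv e.symm).mp h)

theorem OperatorMonotone.toBlocks₁₁_cfc_le (hf : OperatorMonotone f)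
    (hc : ContinuousOn f (Ici 0)) {M : Matrix (m ⊕ n) (m ⊕ n) ℂ} (hM : 0 ≤ M) :
    (cfc f M).toBlocks₁₁ ≤ cfc f M.toBlocks₁₁ := by
  obtain ⟨X, R, Y, rfl⟩ : ∃ X R Y, M = fromBlocks X R Rᴴ Y := by
    have h := hM.posSemidef.isHermitian
    rw [← fromBlocks_toBlocks M, isHermitian_fromBlocks_iff] at h
    exact ⟨M.toBlocks₁₁, M.toBlocks₁₂, M.toBlocks₂₂, by rw [h.2.1, fromBlocks_toBlocks]⟩
  have hX : 0 ≤ X := (hM.posSemidef.submatrix Sum.inl).nonneg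
  have hY : 0 ≤ Y := (hM.posSemidef.submatrix Sum.inr).nonneg
  rw [toBlocks_fromBlocks₁₁]
  refine le_cfc_of_forall_pos_le_cfc_add_smul hc hX
    (posSemidef_self_mul_conjTranspose R).nonneg fun ε hε ↦ ?_
  have hXε : 0 ≤ X + ε • (R * Rᴴ) :=
    add_nonneg hX (smul_nonneg hε.le (posSemidef_self_mul_conjTranspose R).nonneg)
  have hYε : 0 ≤ Y + ε⁻¹ • 1 :=
    add_nonneg hY (smul_nonneg (inv_nonneg.mpr hε.le) zero_le_one)
  calc (cfc f (fromBlocks X R Rᴴ Y)).toBlocks₁₁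
      ≤ (cfc f (fromBlocks (X + ε • (R * Rᴴ)) 0 0 (Y + ε⁻¹ • 1))).toBlocks₁₁ :=
        toBlocks₁₁_mono (hf.cfc_le_cfc hM (fromBlocks_le_fromBlocks_add_smul hε X R Y))
    _ = cfc f (X + ε • (R * Rᴴ)) := by
        rw [cfc_fromBlocks_zero_zero f hXε.posSemidef.isHermitian hYε.posSemidef.isHermitian,
          toBlocks_fromBlocks₁₁]

theorem OperatorMonotone.operatorConcave (hf : OperatorMonotone f)
    (hc : ContinuousOn f (Ici 0)) : OperatorConcave f := by
  intro n A B hA hB s ⟨hs0, hs1⟩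
  change s • cfc f A + (1 - s) • cfc f B ≤ cfc f (s • A + (1 - s) • B)
  have hsq : √s ^ 2 + √(1 - s) ^ 2 = 1 := by
    rw [sq_sqrt hs0, sq_sqrt (sub_nonneg.mpr hs1)]; ring
  set V : Matrix (Fin n ⊕ Fin n) (Fin n ⊕ Fin n) ℂ := blockRotation √s √(1 - s)
  have hV : V ∈ unitary _ := blockRotation_mem_unitary hsq
  have hT : 0 ≤ fromBlocks A 0 0 B := fromBlocks_zero_zero_nonneg hA.nonneg hB.nonneg
  have h := hf.toBlocks₁₁_cfc_le hc (star_right_conjugate_nonneg hT V)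
  rwa [cfc_unitary_conj f hV hT.posSemidef.isHermitian,
    cfc_fromBlocks_zero_zero f hA.isHermitian hB.isHermitian, toBlocks₁₁_blockRotation_conj,
    toBlocks₁₁_blockRotation_conj, sq_sqrt hs0, sq_sqrt (sub_nonneg.mpr hs1)] at h

theorem OperatorConcave.operatorMonotone (hf : OperatorConcave f)
    (hnn : ∀ x : ℝ, 0 ≤ x → 0 ≤ f x) : OperatorMonotone f := by
  intro n A B hA hB hAB
  change cfc f A ≤ cfc f B
  have key : ∀ s ∈ Ioo (0 : ℝ) 1, s • cfc f A ≤ cfc f B := by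
    rintro s ⟨hs0, hs1⟩
    set C := (1 - s)⁻¹ • (B - s • A)
    have hC : 0 ≤ C := by
      refine smul_nonneg (inv_nonneg.mpr (sub_nonneg.mpr hs1.le)) ?_
      have : B - s • A = (B - A) + (1 - s) • A := by module
      rw [this]
      exact add_nonneg hAB.nonneg (smul_nonneg (sub_nonneg.mpr hs1.le) hA.nonneg)
    have hsum : s • A + (1 - s) • C = B := by
      simp only [C, smul_smul, mul_inv_cancel₀ (sub_ne_zero.mpr hs1.ne'), one_smul]
      abel
    have h := hf n A C hA hC.posSemidef s ⟨hs0.le, hs1.le⟩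
    rw [hsum] at h
    calc s • cfc f A
        ≤ s • cfc f A + (1 - s) • cfc f C :=
          le_add_of_nonneg_right (smul_nonneg (sub_nonneg.mpr hs1.le)
            (cfc_nonneg fun x hx ↦ hnn x (spectrum_nonneg_of_nonneg hC hx)))
      _ ≤ cfc f B := h
  refine le_of_tendsto ?_ (eventually_of_mem (Ioo_mem_nhdsLT zero_lt_one) key)
  exact ((continuous_id.smul continuous_const).tendsto' 1 _ (one_smul ℝ _)).mono_left
    nhdsWithin_le_nhds

end

theorem stmt11 (f : ℝ → ℝ) (hc : ContinuousOn f (Set.Ici 0))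
    (hnn : ∀ x : ℝ, 0 ≤ x → 0 ≤ f x) :
    OperatorMonotone f ↔ OperatorConcave f :=
  ⟨fun h ↦ h.operatorConcave hc, fun h ↦ h.operatorMonotone hnn⟩
end

section
/- Let μ be a finite Borel measure on [0,1] and let f : [0,∞) → [0,∞) be defined by f(x) = ∫_{[0,1]} (1 !_t x) dμ(t). Let Θ : [0,1] → [0,1] be the map t ↦ 1-t and let Θ_*μ denote the pushforward measure of μ under Θ. Then for every x ∈ (0,∞), x·f(1/x) = ∫_{[0,1]} (1 !_t x) d(Θ_*μ)(t). -/
open MeasureTheory Real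

/-- The map `Θ : [0,1] → [0,1]`, `t ↦ 1 - t`. -/
noncomputable def theta (t : Set.Icc (0 : ℝ) 1) : Set.Icc (0 : ℝ) 1 :=
  ⟨1 - (t : ℝ), Set.mem_Icc.mpr
    ⟨by linarith [(Set.mem_Icc.mp t.2).2], by linarith [(Set.mem_Icc.mp t.2).1]⟩⟩

lemma whm_of_ne_zero (t : ℝ) {x : ℝ} (hx : x ≠ 0) : whm t x = x / ((1 - t) * x + t) := by
  simp [whm, hx]

lemma measurable_whm_left (x : ℝ) : Measurable fun t => whm t x := by
  unfold whm
  exact Measurable.ite ((measurableSet_singleton 0).inter (MeasurableSet.const (x = 0)))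
    measurable_const (by fun_prop)

lemma continuous_theta : Continuous theta := by
  unfold theta
  fun_prop

lemma mul_whm_inv (t : ℝ) {x : ℝ} (hx : x ≠ 0) : x * whm t x⁻¹ = whm (1 - t) x := by
  rw [whm_of_ne_zero _ hx, whm_of_ne_zero _ (inv_ne_zero hx)]
  field_simp
  ring

theorem stmt14_general (μ : Measure (Set.Icc (0 : ℝ) 1)) (f : ℝ → ℝ)
    (hf : ∀ x : ℝ, 0 ≤ x → f x = ∫ t : Set.Icc (0 : ℝ) 1, whm (t : ℝ) x ∂μ)
    (x : ℝ) (hx : 0 < x) :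
    x * f (1 / x) = ∫ t : Set.Icc (0 : ℝ) 1, whm (t : ℝ) x ∂(Measure.map theta μ) := by
  rw [hf _ (by positivity), integral_map (f := fun t : Set.Icc (0 : ℝ) 1 => whm t x)
    continuous_theta.aemeasurable
    ((measurable_whm_left x).comp measurable_subtype_coe).aestronglyMeasurable,
    ← integral_const_mul]
  congr 1 with t
  rw [one_div, mul_whm_inv _ hx.ne']
  rfl

theorem stmt14 (μ : Measure (Set.Icc (0 : ℝ) 1)) [IsFiniteMeasure μ] (f : ℝ → ℝ)
    (hf : ∀ x : ℝ, 0 ≤ x → f x = ∫ t : Set.Icc (0 : ℝ) 1, whm (t : ℝ) x ∂μ)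
    (x : ℝ) (hx : 0 < x) :
    x * f (1 / x) = ∫ t : Set.Icc (0 : ℝ) 1, whm (t : ℝ) x ∂(Measure.map theta μ) :=
  stmt14_general μ f hf x hx
end
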